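/- arXiv:2302.04262 — 7 statements merged into one kernel-verified Lean document; each statement's English description precedes it below -/
import Mathlib

section
/- Let P = α·P* + (1-α)·P0, where P* is the pushforward of P0 under h(x,y) = (g(x), y*) for a map g: X→X and fixed label y*. Suppose P0({g(x): x∈X}) ≤ ξ and Δ = max over x in the signal set of (max_y P0(y|x) − P0(y*|x)). Then the Bayes optimal classifier f under P satisfies Pr_{x∼P0}[f(g(x)) = y*] ≥ 1 − ((1-α)/α)·Δ·ξ. -/
open Finset

/-- Feature--label signal strategy against the Bayes optimal classifier:
the success `Pr_{x∼P0}[f(g(x)) = y*]` is at least `1 - ((1-α)/α)·Δ·ξ`. -/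
theorem stmt_3 {X Y : Type*} [Fintype X] [Fintype Y] [Nonempty Y]
    [DecidableEq X] [DecidableEq Y]
    (P0 : X × Y → ℝ) (g : X → X) (ystar : Y) (α ξ Δ : ℝ) (f : X → Y)
    (P : X × Y → ℝ)
    (hP0nonneg : ∀ z, 0 ≤ P0 z) (hP0sum : ∑ z, P0 z = 1)
    (hα0 : 0 < α) (hα1 : α < 1)
    -- `P = α·P* + (1-α)·P0` where `P*` is the pushforward of `P0` under `(x,y) ↦ (g x, y*)`
    (hP : ∀ z : X × Y, P z =
      α * (if z.2 = ystar then
            ∑ x ∈ univ.filter fun x' => g x' = z.1, ∑ y, P0 (x, y)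
          else 0) + (1 - α) * P0 z)
    -- `f` is Bayes optimal under `P` (ties broken so strict dominance determines `f`)
    (hf : ∀ (x : X) (y : Y), (∀ y' : Y, y' ≠ y → P (x, y) > P (x, y')) → f x = y)
    -- the signal is `ξ`-unique: `P0(g(X)) ≤ ξ`
    (hξ : ∑ x' ∈ univ.image g, (∑ y, P0 (x', y)) ≤ ξ)
    -- `Δ` bounds the suboptimality gap of `y*` on the signal set
    (hΔ : ∀ x' ∈ univ.image g, ∀ y : Y,
      P0 (x', y) / (∑ y', P0 (x', y')) - P0 (x', ystar) / (∑ y', P0 (x', y')) ≤ Δ) :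
    ∑ x ∈ univ.filter fun x => f (g x) = ystar, (∑ y, P0 (x, y)) ≥
      1 - ((1 - α) / α) * Δ * ξ := by
  set p : X → ℝ := fun x => ∑ y, P0 (x, y) with hp
  have hpnn : ∀ x, 0 ≤ p x := fun x => Finset.sum_nonneg fun y _ => hP0nonneg _
  have hpsum : ∑ x, p x = 1 := by
    rw [← hP0sum, ← Fintype.sum_prod_type]
  haveI : Nonempty X := by
    rcases isEmpty_or_nonempty X with h | h
    · exfalso; simp at hP0sum
    · exact h
  obtain ⟨x₀⟩ := ‹Nonempty X›
  have hΔ0 : 0 ≤ Δ := by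
    have := hΔ (g x₀) (Finset.mem_image_of_mem g (mem_univ x₀)) ystar
    simpa using this
  have hcnn : 0 ≤ (1 - α) / α * Δ :=
    mul_nonneg (div_nonneg (by linarith) hα0.le) hΔ0
  have hsplit : ∑ x ∈ univ.filter (fun x => f (g x) = ystar), p x
      + ∑ x ∈ univ.filter (fun x => ¬ f (g x) = ystar), p x = 1 := by
    rw [Finset.sum_filter_add_sum_filter_not]; exact hpsum
  have key : ∀ x' ∈ univ.image g,
      ∑ x ∈ (univ.filter (fun x => ¬ f (g x) = ystar)).filter (fun x => g x = x'), p x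
        ≤ (1 - α) / α * Δ * p x' := by
    intro x' hx'
    rcases ((univ.filter (fun x => ¬ f (g x) = ystar)).filter
        (fun x => g x = x')).eq_empty_or_nonempty with he | ⟨xb, hxb⟩
    · rw [he, Finset.sum_empty]
      exact mul_nonneg hcnn (hpnn x')
    · rw [Finset.mem_filter, Finset.mem_filter] at hxb
      obtain ⟨⟨-, hfb⟩, hgb⟩ := hxb
      have hbad : ¬ ∀ y' : Y, y' ≠ ystar → P (x', ystar) > P (x', y') := by
        intro h
        exact hfb (by rw [hgb]; exact hf x' ystar h)
      push_neg at hbad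
      obtain ⟨y, hy, hle⟩ := hbad
      rw [hP (x', ystar), hP (x', y)] at hle
      simp only [if_pos rfl, if_neg hy, if_true, mul_zero, zero_add] at hle
      set M : ℝ := ∑ x ∈ univ.filter (fun x'' => g x'' = x'), p x with hM
      have hgap : P0 (x', y) - P0 (x', ystar) ≤ Δ * p x' := by
        rcases eq_or_lt_of_le (hpnn x') with hq0 | hq
        · have h1 : P0 (x', y) = 0 := by
            have := (Finset.sum_eq_zero_iff_of_nonneg
              (fun y' _ => hP0nonneg (x', y'))).mp hq0.symm
            exact this y (mem_univ y)
          have h2 : P0 (x', ystar) = 0 := by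
            have := (Finset.sum_eq_zero_iff_of_nonneg
              (fun y' _ => hP0nonneg (x', y'))).mp hq0.symm
            exact this ystar (mem_univ ystar)
          rw [h1, h2, ← hq0]; simp
        · have h := hΔ x' hx' y
          rw [div_sub_div_same] at h
          exact (div_le_iff₀ hq).mp h
      have hαM : α * M ≤ (1 - α) * Δ * p x' := by
        nlinarith [mul_le_mul_of_nonneg_left hgap (by linarith : (0:ℝ) ≤ 1 - α), hle]
      have hMle : M ≤ (1 - α) / α * Δ * p x' := by
        rw [div_mul_eq_mul_div, div_mul_eq_mul_div, le_div_iff₀ hα0]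
        nlinarith [hαM]
      refine le_trans ?_ hMle
      apply Finset.sum_le_sum_of_subset_of_nonneg
      · intro x hx
        rw [Finset.mem_filter] at hx ⊢
        exact ⟨mem_univ x, hx.2⟩
      · intro x _ _; exact hpnn x
  have hB : ∑ x ∈ univ.filter (fun x => ¬ f (g x) = ystar), p x
      ≤ (1 - α) / α * Δ * ξ := by
    calc ∑ x ∈ univ.filter (fun x => ¬ f (g x) = ystar), p x
        = ∑ x' ∈ univ.image g,
            ∑ x ∈ (univ.filter (fun x => ¬ f (g x) = ystar)).filter (fun x => g x = x'), p x :=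
          (Finset.sum_fiberwise_of_maps_to
            (fun x _ => Finset.mem_image_of_mem g (mem_univ x)) p).symm
      _ ≤ ∑ x' ∈ univ.image g, (1 - α) / α * Δ * p x' := Finset.sum_le_sum key
      _ = (1 - α) / α * Δ * ∑ x' ∈ univ.image g, p x' := by rw [Finset.mul_sum]
      _ ≤ (1 - α) / α * Δ * ξ := mul_le_mul_of_nonneg_left hξ hcnn
  linarith [hsplit, hB]
end

section
/- Let P = α·P* + (1-α)·P0, where P* is the pushforward of P0 under the map h(x,y) = (g(x), y*) if y = y* and (x,y) otherwise. Fix x* in the signal set with P0(g^{-1}(x*)) > 0. If P0(y*|x) ≥ p > 0 for all x, and α > ((1-p)/p)·P0(x*)/P0(g^{-1}(x*)), then P(x*, y*) > P(x*, y) for all y ≠ y*, so the Bayes optimal classifier assigns f(x*) = y*. -/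
open Finset

/-- Claim for the feature-only signal strategy: if `P0(y*|x) ≥ p > 0` on the support
of `P0` and `α > ((1-p)/p)·P0(x*)/P0(g⁻¹(x*))` then under the mixture
`P = α·P* + (1-α)·P0` we have `P(x*,y*) > P(x*,y)` for all `y ≠ y*`. -/
theorem stmt_6 {X Y : Type*} [Fintype X] [Fintype Y] [Nonempty Y]
    [DecidableEq X] [DecidableEq Y]
    (P0 : X × Y → ℝ) (g : X → X) (ystar : Y) (α p : ℝ) (xstar : X)
    (P : X × Y → ℝ)
    (hP0nonneg : ∀ z, 0 ≤ P0 z) (hP0sum : ∑ z, P0 z = 1)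
    (hα0 : 0 < α) (hα1 : α < 1) (hp : 0 < p)
    -- `P = α·P* + (1-α)·P0` where `P*` is the pushforward of `P0` under the
    -- feature-only strategy `h(x,y) = (g x, y*)` if `y = y*`, else `(x,y)`
    (hP : ∀ z : X × Y, P z =
      α * (if z.2 = ystar then
            ∑ x ∈ univ.filter fun x' => g x' = z.1, P0 (x, ystar)
          else P0 z) + (1 - α) * P0 z)
    -- positivity: `P0(y*|x) ≥ p` for all `x` in the support of `P0`
    (hpos : ∀ x : X, 0 < ∑ y, P0 (x, y) → p ≤ P0 (x, ystar) / ∑ y, P0 (x, y))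
    -- `x*` is in the signal set and its preimage has positive mass
    (hsig : ∃ x : X, g x = xstar)
    (hpre : 0 < ∑ x ∈ univ.filter fun x' => g x' = xstar, ∑ y, P0 (x, y))
    (hα : α > ((1 - p) / p) * (∑ y, P0 (xstar, y)) /
      (∑ x ∈ univ.filter fun x' => g x' = xstar, ∑ y, P0 (x, y))) :
    ∀ y : Y, y ≠ ystar → P (xstar, ystar) > P (xstar, y) := by

  intro y hy
  set S := ∑ x ∈ univ.filter fun x' => g x' = xstar, P0 (x, ystar) with hS
  set M := ∑ x ∈ univ.filter fun x' => g x' = xstar, ∑ y, P0 (x, y) with hM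
  set R := ∑ y, P0 (xstar, y) with hR
  have hMpos : 0 < M := hpre
  have hSM : p * M ≤ S := by
    rw [hS, hM, Finset.mul_sum]
    apply Finset.sum_le_sum
    intro x _
    rcases (Finset.sum_nonneg fun y _ => hP0nonneg (x, y)).lt_or_eq with h | h
    · calc p * ∑ y, P0 (x, y)
          ≤ (P0 (x, ystar) / ∑ y, P0 (x, y)) * ∑ y, P0 (x, y) :=
            mul_le_mul_of_nonneg_right (hpos x h) h.le
        _ = P0 (x, ystar) := div_mul_cancel₀ _ h.ne'
    · have h0 : ∀ y', P0 (x, y') = 0 := fun y' =>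
        (Finset.sum_eq_zero_iff_of_nonneg (fun y _ => hP0nonneg (x, y))).mp h.symm y'
          (Finset.mem_univ _)
      simp [← h, h0]
  have hadd : P0 (xstar, y) + P0 (xstar, ystar) ≤ R := by
    rw [hR, ← Finset.sum_erase_add univ _ (Finset.mem_univ ystar)]
    exact add_le_add (Finset.single_le_sum (fun i _ => hP0nonneg _)
      (Finset.mem_erase.mpr ⟨hy, Finset.mem_univ y⟩)) le_rfl
  have hRnn : 0 ≤ R := Finset.sum_nonneg fun y' _ => hP0nonneg _
  have hy1p : P0 (xstar, y) ≤ (1 - p) * R := by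
    rcases hRnn.lt_or_eq with h | h
    · have hpR : p * R ≤ P0 (xstar, ystar) := by
        calc p * R ≤ (P0 (xstar, ystar) / R) * R :=
              mul_le_mul_of_nonneg_right (hpos xstar h) h.le
          _ = P0 (xstar, ystar) := div_mul_cancel₀ _ h.ne'
      nlinarith
    · have h0 : P0 (xstar, y) = 0 :=
        (Finset.sum_eq_zero_iff_of_nonneg (fun y' _ => hP0nonneg _)).mp h.symm y
          (Finset.mem_univ _)
      simp [h0, ← h]
  have hkey : (1 - p) * R < α * (p * M) := by
    have h1 : ((1 - p) / p) * R / M < α := hα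
    have h2 : ((1 - p) / p) * R / M * (p * M) < α * (p * M) := by
      apply mul_lt_mul_of_pos_right h1 (by positivity)
    calc (1 - p) * R = ((1 - p) / p) * R / M * (p * M) := by
          field_simp
        _ < α * (p * M) := h2
  have hPy : P (xstar, y) = P0 (xstar, y) := by
    rw [hP (xstar, y)]
    simp only [hy, if_false]
    ring
  have hPystar : P (xstar, ystar) = α * S + (1 - α) * P0 (xstar, ystar) := by
    rw [hP (xstar, ystar)]
    simp [hS]
  rw [hPy, hPystar]
  have hnn : 0 ≤ P0 (xstar, ystar) := hP0nonneg _
  nlinarith [mul_le_mul_of_nonneg_left hSM hα0.le]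
end

section
/- Under the feature-only signal strategy with ξ-unique signal and positivity constant p (P0(y*|x) ≥ p for all x), the success of the Bayes optimal classifier under P = α·P* + (1-α)·P0 satisfies S(α) ≥ 1 − ((1-p)/(p·α))·ξ. -/
open Finset

/-- Theorem 2 (feature-only signal strategy, Bayes optimal case):
`S(α) ≥ 1 - ((1-p)/(p·α))·ξ`. -/
theorem stmt_7 {X Y : Type*} [Fintype X] [Fintype Y] [Nonempty Y]
    [DecidableEq X] [DecidableEq Y]
    (P0 : X × Y → ℝ) (g : X → X) (ystar : Y) (α p ξ : ℝ) (f : X → Y)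
    (P : X × Y → ℝ)
    (hP0nonneg : ∀ z, 0 ≤ P0 z) (hP0sum : ∑ z, P0 z = 1)
    (hα0 : 0 < α) (hα1 : α < 1) (hp : 0 < p)
    -- `P = α·P* + (1-α)·P0` where `P*` is the pushforward of `P0` under the
    -- feature-only strategy `h(x,y) = (g x, y*)` if `y = y*`, else `(x,y)`
    (hP : ∀ z : X × Y, P z =
      α * (if z.2 = ystar then
            ∑ x ∈ univ.filter fun x' => g x' = z.1, P0 (x, ystar)
          else P0 z) + (1 - α) * P0 z)
    -- positivity: `P0(y*|x) ≥ p` for all `x` in the support of `P0`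
    (hpos : ∀ x : X, 0 < ∑ y, P0 (x, y) → p ≤ P0 (x, ystar) / ∑ y, P0 (x, y))
    -- `f` is Bayes optimal under `P` (ties broken so strict dominance determines `f`)
    (hf : ∀ (x : X) (y : Y), (∀ y' : Y, y' ≠ y → P (x, y) > P (x, y')) → f x = y)
    -- the signal is `ξ`-unique: `P0(g(X)) ≤ ξ`
    (hξ : ∑ x' ∈ univ.image g, (∑ y, P0 (x', y)) ≤ ξ) :
    ∑ x ∈ univ.filter fun x => f (g x) = ystar, (∑ y, P0 (x, y)) ≥
      1 - ((1 - p) / (p * α)) * ξ := by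
  classical
  set m : X → ℝ := fun x => ∑ y, P0 (x, y) with hm
  have hmnonneg : ∀ x, 0 ≤ m x := fun x =>
    Finset.sum_nonneg fun y _ => hP0nonneg _
  have hmsum : ∑ x, m x = 1 := by
    rw [← hP0sum, Fintype.sum_prod_type]
  -- pointwise: p * m x ≤ P0 (x, ystar)
  have hkey : ∀ x, p * m x ≤ P0 (x, ystar) := by
    intro x
    rcases lt_or_eq_of_le (hmnonneg x) with hpos' | hzero
    · have := hpos x hpos'
      calc p * m x ≤ (P0 (x, ystar) / m x) * m x := by
            exact mul_le_mul_of_nonneg_right this (hmnonneg x)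
        _ = P0 (x, ystar) := div_mul_cancel₀ _ (ne_of_gt hpos')
    · have h1 : P0 (x, ystar) ≤ m x := by
        exact Finset.single_le_sum (fun y _ => hP0nonneg (x, y)) (mem_univ ystar)
      have h2 : 0 ≤ P0 (x, ystar) := hP0nonneg _
      nlinarith [hzero]
  -- two terms bound
  have htwoterm : ∀ x (y : Y), y ≠ ystar → P0 (x, y) + P0 (x, ystar) ≤ m x := by
    intro x y hy
    have : ∑ y' ∈ ({y, ystar} : Finset Y), P0 (x, y') ≤ m x := by
      apply Finset.sum_le_sum_of_subset_of_nonneg (Finset.subset_univ _)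
      intro i _ _; exact hP0nonneg _
    rwa [Finset.sum_pair hy] at this
  -- p ≤ 1
  have hp1 : p ≤ 1 := by
    by_contra h
    push_neg at h
    have hall : ∀ x, m x = 0 := by
      intro x
      by_contra hx
      have hpos' : 0 < m x := lt_of_le_of_ne (hmnonneg x) (Ne.symm hx)
      have h1 := hpos x hpos'
      have h2 : P0 (x, ystar) ≤ m x :=
        Finset.single_le_sum (fun y _ => hP0nonneg (x, y)) (mem_univ ystar)
      have : P0 (x, ystar) / m x ≤ 1 := div_le_one_of_le₀ h2 (hmnonneg x)
      linarith
    have : (1 : ℝ) = 0 := by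
      rw [← hmsum, Finset.sum_eq_zero fun x _ => hall x]
    norm_num at this
  -- key bound for bad signal points
  set Bad : Finset X := (univ.image g).filter (fun x' => f x' ≠ ystar) with hBad
  have hbadbound : ∀ x' ∈ Bad,
      p * α * (∑ x ∈ univ.filter (fun x => g x = x'), m x) ≤ (1 - p) * m x' := by
    intro x' hx'
    rw [hBad, Finset.mem_filter] at hx'
    obtain ⟨_, hfne⟩ := hx'
    have hnot : ¬ (∀ y' : Y, y' ≠ ystar → P (x', ystar) > P (x', y')) := by
      intro h; exact hfne (hf x' ystar h)
    push_neg at hnot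
    obtain ⟨y', hy'ne, hle⟩ := hnot
    -- P (x', y') = P0 (x', y')
    have hPy' : P (x', y') = P0 (x', y') := by
      rw [hP (x', y')]
      simp only [hy'ne, if_false]
      ring
    -- P (x', ystar) ≥ α * ∑_{g x = x'} P0 (x, ystar)
    have hPystar : α * (∑ x ∈ univ.filter (fun x => g x = x'), P0 (x, ystar))
        ≤ P (x', ystar) := by
      rw [hP (x', ystar)]
      simp only [if_pos rfl, if_true]
      have : 0 ≤ (1 - α) * P0 (x', ystar) :=
        mul_nonneg (by linarith) (hP0nonneg _)
      linarith
    have hS : p * (∑ x ∈ univ.filter (fun x => g x = x'), m x)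
        ≤ ∑ x ∈ univ.filter (fun x => g x = x'), P0 (x, ystar) := by
      rw [Finset.mul_sum]
      exact Finset.sum_le_sum fun x _ => hkey x
    have hupper : P0 (x', y') ≤ (1 - p) * m x' := by
      have h1 := htwoterm x' y' hy'ne
      have h2 := hkey x'
      linarith
    have hαS : α * (p * (∑ x ∈ univ.filter (fun x => g x = x'), m x))
        ≤ α * (∑ x ∈ univ.filter (fun x => g x = x'), P0 (x, ystar)) :=
      mul_le_mul_of_nonneg_left hS (le_of_lt hα0)
    calc p * α * (∑ x ∈ univ.filter (fun x => g x = x'), m x)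
        = α * (p * (∑ x ∈ univ.filter (fun x => g x = x'), m x)) := by ring
      _ ≤ P (x', ystar) := le_trans hαS hPystar
      _ ≤ P (x', y') := hle
      _ = P0 (x', y') := hPy'
      _ ≤ (1 - p) * m x' := hupper
  -- bad mass decomposition
  have hbaddecomp : ∑ x ∈ univ.filter (fun x => ¬ f (g x) = ystar), m x
      = ∑ x' ∈ Bad, ∑ x ∈ univ.filter (fun x => g x = x'), m x := by
    have hmaps : ∀ x ∈ univ.filter (fun x => ¬ f (g x) = ystar), g x ∈ Bad := by
      intro x hx
      rw [Finset.mem_filter] at hx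
      rw [hBad, Finset.mem_filter]
      exact ⟨Finset.mem_image_of_mem g (mem_univ x), hx.2⟩
    rw [← Finset.sum_fiberwise_of_maps_to hmaps m]
    apply Finset.sum_congr rfl
    intro x' hx'
    apply Finset.sum_congr _ (fun _ _ => rfl)
    ext x
    rw [hBad, Finset.mem_filter] at hx'
    simp only [Finset.mem_filter, Finset.mem_univ, true_and]
    constructor
    · rintro ⟨_, h⟩; exact h
    · intro h
      refine ⟨?_, h⟩
      rw [h]; exact hx'.2
  -- bound bad mass
  have hbadsub : Bad ⊆ univ.image g := Finset.filter_subset _ _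
  have hbound : p * α * (∑ x ∈ univ.filter (fun x => ¬ f (g x) = ystar), m x)
      ≤ (1 - p) * ξ := by
    rw [hbaddecomp, Finset.mul_sum]
    calc ∑ x' ∈ Bad, p * α * (∑ x ∈ univ.filter (fun x => g x = x'), m x)
        ≤ ∑ x' ∈ Bad, (1 - p) * m x' := Finset.sum_le_sum hbadbound
      _ = (1 - p) * ∑ x' ∈ Bad, m x' := by rw [Finset.mul_sum]
      _ ≤ (1 - p) * ∑ x' ∈ univ.image g, m x' := by
          apply mul_le_mul_of_nonneg_left _ (by linarith)
          exact Finset.sum_le_sum_of_subset_of_nonneg hbadsub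
            (fun x _ _ => hmnonneg x)
      _ ≤ (1 - p) * ξ := mul_le_mul_of_nonneg_left hξ (by linarith)
  have hpα : 0 < p * α := mul_pos hp hα0
  have hbadle : ∑ x ∈ univ.filter (fun x => ¬ f (g x) = ystar), m x
      ≤ ((1 - p) / (p * α)) * ξ := by
    rw [div_mul_eq_mul_div, le_div_iff₀ hpα]
    linarith [hbound]
  have hsplit : (∑ x ∈ univ.filter (fun x => f (g x) = ystar), m x)
      + (∑ x ∈ univ.filter (fun x => ¬ f (g x) = ystar), m x) = 1 := by
    rw [Finset.sum_filter_add_sum_filter_not, hmsum]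
  linarith [hbadle, hsplit]
end

section
/- Let P = α·P* + (1-α)·P0, where P* is the pushforward of P0 under h(x,y) = (x, y*(x)) with y*(x) = argmax_y P0(y|g(x)). Fix x with P0(x) > 0. If α > (1-α)·2τ(x), where τ(x) = max_y |P0(y|x) − P0(y|g(x))|, then the Bayes optimal classifier f under P satisfies f(x) = y*(x) = f(g(x)). -/
open Finset

/-- Claim for the erasure strategy: if `α > (1-α)·2τ(x)` then the Bayes optimal
classifier under the mixture `P = α·P* + (1-α)·P0` satisfies
`f(x) = y*(x) = f(g(x))`, where `y*(x) = argmax_y P0(y | g(x))`. -/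
theorem stmt_9 {X Y : Type*} [Fintype X] [Fintype Y] [Nonempty Y]
    [DecidableEq X] [DecidableEq Y]
    (P0 : X × Y → ℝ) (g : X → X) (ystar : X → Y) (α : ℝ) (f : X → Y)
    (P : X × Y → ℝ) (x : X)
    (hP0nonneg : ∀ z, 0 ≤ P0 z) (hP0sum : ∑ z, P0 z = 1)
    (hα0 : 0 < α) (hα1 : α < 1)
    -- `g` is a feature summary: idempotent
    (hidem : ∀ x' : X, g (g x') = g x')
    -- `y*(x') = argmax_y P0(y | g(x'))`, a function of the summary `g(x')`
    (hystar : ∀ (x' : X) (y : Y),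
      P0 (g x', y) / (∑ y', P0 (g x', y')) ≤
        P0 (g x', ystar x') / (∑ y', P0 (g x', y')))
    (hfactor : ∀ x₁ x₂ : X, g x₁ = g x₂ → ystar x₁ = ystar x₂)
    -- `P = α·P* + (1-α)·P0` where `P*` is the pushforward of `P0` under `(x,y) ↦ (x, y*(x))`
    (hP : ∀ z : X × Y, P z =
      α * (if z.2 = ystar z.1 then ∑ y, P0 (z.1, y) else 0) + (1 - α) * P0 z)
    -- `f` is Bayes optimal under `P` (ties broken so strict dominance determines `f`)
    (hf : ∀ (x' : X) (y : Y), (∀ y' : Y, y' ≠ y → P (x', y) > P (x', y')) → f x' = y)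
    (hP0x : 0 < ∑ y, P0 (x, y)) (hP0gx : 0 < ∑ y, P0 (g x, y))
    -- `α > (1-α)·2·τ(x)` with `τ(x) = max_y |P0(y|x) - P0(y|g(x))|`
    (hcond : α > (1 - α) * 2 *
      (univ.sup' univ_nonempty fun y =>
        |P0 (x, y) / (∑ y', P0 (x, y')) - P0 (g x, y) / (∑ y', P0 (g x, y'))|)) :
    f x = ystar x ∧ f (g x) = ystar x := by

  have hα1' : (0:ℝ) < 1 - α := by linarith
  set Sx := ∑ y, P0 (x, y) with hSx
  set Sg := ∑ y, P0 (g x, y) with hSg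
  set τ := (univ.sup' univ_nonempty fun y =>
        |P0 (x, y) / (∑ y', P0 (x, y')) - P0 (g x, y) / (∑ y', P0 (g x, y'))|) with hτ
  -- f (g x) = ystar x
  have hgs : ystar (g x) = ystar x := hfactor (g x) x (hidem x)
  have hPgle : ∀ y : Y, P0 (g x, y) ≤ P0 (g x, ystar x) := by
    intro y
    have h := mul_le_mul_of_nonneg_right (hystar x y) hP0gx.le
    rwa [div_mul_cancel₀ _ hP0gx.ne', div_mul_cancel₀ _ hP0gx.ne'] at h
  have hfg : f (g x) = ystar x := by
    rw [← hgs]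
    apply hf
    intro y' hy'
    rw [hP, hP, hgs]
    have hy'' : y' ≠ ystar x := by simpa [hgs] using hy'
    simp only [if_pos rfl, if_neg hy'', if_true]
    have h1 := hPgle y'
    nlinarith [hP0gx]
  refine ⟨?_, hfg⟩
  -- f x = ystar x
  apply hf
  intro y' hy'
  rw [hP, hP]
  simp only [if_pos rfl, if_neg hy', if_true]
  -- bound: P0 (x, y') - P0 (x, ystar x) ≤ 2 τ Sx
  have hτb : ∀ y : Y, |P0 (x, y) / Sx - P0 (g x, y) / Sg| ≤ τ := by
    intro y
    rw [hτ, hSx, hSg]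
    exact le_sup' (fun y => |P0 (x, y) / (∑ y', P0 (x, y')) - P0 (g x, y) / (∑ y', P0 (g x, y'))|) (mem_univ y)
  have h1 := hτb y'
  have h2 := hτb (ystar x)
  have h3 : P0 (g x, y') / Sg ≤ P0 (g x, ystar x) / Sg := hystar x y'
  have habs1 := abs_le.mp h1
  have habs2 := abs_le.mp h2
  have hq : P0 (x, y') / Sx - P0 (x, ystar x) / Sx ≤ 2 * τ := by
    have := habs1.2
    have := habs2.1
    linarith
  have hqa : P0 (x, y') - P0 (x, ystar x) ≤ 2 * τ * Sx := by
    have := mul_le_mul_of_nonneg_right hq (le_of_lt hP0x)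
    rw [sub_mul, div_mul_cancel₀ _ (ne_of_gt hP0x), div_mul_cancel₀ _ (ne_of_gt hP0x)] at this
    linarith
  have hcond' : (1 - α) * (2 * τ) * Sx < α * Sx := by
    apply mul_lt_mul_of_pos_right _ hP0x
    calc (1 - α) * (2 * τ) = (1 - α) * 2 * τ := by ring
    _ < α := hcond
  nlinarith [mul_le_mul_of_nonneg_left hqa (le_of_lt hα1')]
end

section
/- Under the erasure strategy, the success of the Bayes optimal classifier under P = α·P* + (1-α)·P0 satisfies S(α) ≥ 1 − (2(1-α)/α)·τ, where τ = E_{x∼P0} max_y |P0(y|x) − P0(y|g(x))|. -/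
open Finset

/-- Theorem 3 (erasure strategy, Bayes optimal case):
`S(α) = Pr_{x∼P0}[f(x) = f(g(x))] ≥ 1 - (2(1-α)/α)·τ`. -/
theorem stmt_10 {X Y : Type*} [Fintype X] [Fintype Y] [Nonempty Y]
    [DecidableEq X] [DecidableEq Y]
    (P0 : X × Y → ℝ) (g : X → X) (ystar : X → Y) (α τ : ℝ) (f : X → Y)
    (P : X × Y → ℝ)
    (hP0nonneg : ∀ z, 0 ≤ P0 z) (hP0sum : ∑ z, P0 z = 1)
    (hα0 : 0 < α) (hα1 : α < 1)
    -- `g` is a feature summary: idempotent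
    (hidem : ∀ x' : X, g (g x') = g x')
    -- `y*(x') = argmax_y P0(y | g(x'))`, a function of the summary `g(x')`
    (hystar : ∀ (x' : X) (y : Y),
      P0 (g x', y) / (∑ y', P0 (g x', y')) ≤
        P0 (g x', ystar x') / (∑ y', P0 (g x', y')))
    (hfactor : ∀ x₁ x₂ : X, g x₁ = g x₂ → ystar x₁ = ystar x₂)
    -- `P = α·P* + (1-α)·P0` where `P*` is the pushforward of `P0` under `(x,y) ↦ (x, y*(x))`
    (hP : ∀ z : X × Y, P z =
      α * (if z.2 = ystar z.1 then ∑ y, P0 (z.1, y) else 0) + (1 - α) * P0 z)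
    -- `f` is Bayes optimal under `P` (ties broken so strict dominance determines `f`)
    (hf : ∀ (x' : X) (y : Y), (∀ y' : Y, y' ≠ y → P (x', y) > P (x', y')) → f x' = y)
    -- convention: `f(g(x)) = argmax_y P0(y | g(x))`
    (hconv : ∀ x' : X, f (g x') = ystar x')
    -- `τ = E_{x∼P0} max_y |P0(y|x) - P0(y|g(x))|`
    (hτ : τ = ∑ x : X, (∑ y, P0 (x, y)) *
      (univ.sup' univ_nonempty fun y =>
        |P0 (x, y) / (∑ y', P0 (x, y')) - P0 (g x, y) / (∑ y', P0 (g x, y'))|)) :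
    ∑ x ∈ univ.filter fun x => f x = f (g x), (∑ y, P0 (x, y)) ≥
      1 - (2 * (1 - α) / α) * τ := by
  classical
  set p : X → ℝ := fun x => ∑ y, P0 (x, y) with hp
  set M : X → ℝ := fun x => univ.sup' univ_nonempty fun y =>
      |P0 (x, y) / (∑ y', P0 (x, y')) - P0 (g x, y) / (∑ y', P0 (g x, y'))| with hM
  have hMle : ∀ (x : X) (y : Y),
      |P0 (x, y) / (∑ y', P0 (x, y')) - P0 (g x, y) / (∑ y', P0 (g x, y'))| ≤ M x := by
    intro x y
    rw [hM]
    exact Finset.le_sup'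
      (fun y => |P0 (x, y) / (∑ y', P0 (x, y')) - P0 (g x, y) / (∑ y', P0 (g x, y'))|)
      (mem_univ y)
  have hpnonneg : ∀ x, 0 ≤ p x := fun x => Finset.sum_nonneg fun y _ => hP0nonneg _
  have hMnonneg : ∀ x, 0 ≤ M x := by
    intro x
    obtain ⟨y⟩ := ‹Nonempty Y›
    exact le_trans (abs_nonneg _) (hMle x y)
  have hc0 : 0 ≤ 2 * (1 - α) / α := div_nonneg (by linarith) hα0.le
  have hsum1 : ∑ x, p x = 1 := by rw [← hP0sum, Fintype.sum_prod_type]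
  have hbad : ∀ x, f x ≠ ystar x → p x ≤ (2 * (1 - α) / α) * (p x * M x) := by
    intro x hx
    rcases eq_or_lt_of_le (hpnonneg x) with h0 | hpos
    · rw [← h0]; simp
    · have hno : ¬ ∀ y' : Y, y' ≠ ystar x → P (x, ystar x) > P (x, y') := fun h => hx (hf x _ h)
      push_neg at hno
      obtain ⟨y', hy', hle⟩ := hno
      rw [hP (x, ystar x), hP (x, y')] at hle
      simp only [if_pos rfl] at hle
      rw [if_neg hy'] at hle
      have key : α * p x + (1 - α) * P0 (x, ystar x) ≤ (1 - α) * P0 (x, y') := by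
        simpa [hp] using hle
      have ha : P0 (x, y') / p x - P0 (g x, y') / (∑ yy, P0 (g x, yy)) ≤ M x :=
        le_trans (le_abs_self _) (hMle x y')
      have hb : P0 (g x, ystar x) / (∑ yy, P0 (g x, yy)) - P0 (x, ystar x) / p x ≤ M x := by
        have h2 : |P0 (g x, ystar x) / (∑ yy, P0 (g x, yy)) - P0 (x, ystar x) / p x| ≤ M x := by
          rw [abs_sub_comm]; exact hMle x (ystar x)
        exact le_trans (le_abs_self _) h2
      have hc := hystar x y'
      have hd : P0 (x, y') / p x - P0 (x, ystar x) / p x ≤ 2 * M x := by linarith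
      have hd' : P0 (x, y') - P0 (x, ystar x) ≤ 2 * M x * p x := by
        rw [div_sub_div_same, div_le_iff₀ hpos] at hd
        linarith [hd]
      rw [div_mul_eq_mul_div, le_div_iff₀ hα0]
      nlinarith [mul_le_mul_of_nonneg_left hd' (by linarith : (0:ℝ) ≤ 1 - α)]
  have hfilter : (univ.filter fun x => f x = f (g x)) = univ.filter fun x => f x = ystar x := by
    apply Finset.filter_congr; intro x _; rw [hconv]
  have hsplit := Finset.sum_filter_add_sum_filter_not univ (fun x => f x = ystar x) p
  have hbadsum : ∑ x ∈ univ.filter (fun x => ¬ f x = ystar x), p x ≤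
      (2 * (1 - α) / α) * τ := by
    calc ∑ x ∈ univ.filter (fun x => ¬ f x = ystar x), p x
        ≤ ∑ x ∈ univ.filter (fun x => ¬ f x = ystar x), (2 * (1 - α) / α) * (p x * M x) :=
          Finset.sum_le_sum fun x hxmem => hbad x (by simpa using (Finset.mem_filter.mp hxmem).2)
      _ = (2 * (1 - α) / α) * ∑ x ∈ univ.filter (fun x => ¬ f x = ystar x), p x * M x := by
          rw [Finset.mul_sum]
      _ ≤ (2 * (1 - α) / α) * τ := by
          apply mul_le_mul_of_nonneg_left _ hc0
          rw [hτ]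
          exact Finset.sum_le_sum_of_subset_of_nonneg (Finset.filter_subset _ _)
            (fun x _ _ => mul_nonneg (hpnonneg x) (hMnonneg x))
  rw [hfilter]
  show (1:ℝ) - (2 * (1 - α) / α) * τ ≤ ∑ x ∈ univ.filter (fun x => f x = ystar x), p x
  linarith [hsplit, hsum1, hbadsum]
end

section
/- Let ℓ(θ; z) be μ-strongly convex in θ for each z, and let θ be the minimizer of E_{z∼P} ℓ(θ'; z), where P = α·P* + (1-α)·P0 and P* = p·P' + (1-p)·P0 with p = min(1, (1/α)·‖g0‖/(‖g'‖+‖g0‖)), g0 = E_{z∼P0}∇ℓ(θ*; z), g' = E_{z∼P'}∇ℓ(θ*; z), and g' = −λ·g0/‖g0‖·‖g'‖ (i.e., g' points exactly opposite to g0). Then ‖θ − θ*‖ ≤ (1/μ)·max(0, (1-α)‖g0‖ − α‖g'‖). -/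
open scoped RealInnerProductSpace

/-- Theorem 4 (convex risk minimization, gradient-neutralizing strategy):
`‖θ - θ*‖ ≤ (1/μ)·max(0, (1-α)‖g0‖ - α‖g'‖)`. -/
theorem stmt_12 {d : ℕ} {Z : Type*} [Fintype Z]
    (gradl : EuclideanSpace ℝ (Fin d) → Z → EuclideanSpace ℝ (Fin d))
    (P0 P' : Z → ℝ) (α μ : ℝ) (θstar θ : EuclideanSpace ℝ (Fin d))
    (hP0nonneg : ∀ z, 0 ≤ P0 z) (hP0sum : ∑ z, P0 z = 1)
    (hP'nonneg : ∀ z, 0 ≤ P' z) (hP'sum : ∑ z, P' z = 1)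
    (hα0 : 0 < α) (hα1 : α ≤ 1) (hμ : 0 < μ)
    (g0 g' : EuclideanSpace ℝ (Fin d))
    (hg0 : g0 = ∑ z, P0 z • gradl θstar z)
    (hg' : g' = ∑ z, P' z • gradl θstar z)
    (hg0ne : g0 ≠ 0)
    -- `P'` is gradient-neutralizing for `θ*`: `g'` points exactly opposite to `g0`
    (hanti : g' = -(‖g'‖ / ‖g0‖) • g0)
    (p : ℝ) (hp : p = min 1 ((1 / α) * (‖g0‖ / (‖g'‖ + ‖g0‖))))
    -- the mixture `P = α·P* + (1-α)·P0` with `P* = p·P' + (1-p)·P0`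
    (P : Z → ℝ)
    (hP : ∀ z, P z = α * (p * P' z + (1 - p) * P0 z) + (1 - α) * P0 z)
    -- `μ`-strong convexity of the risk under `P` (gradient strong monotonicity)
    (hsc : ∀ θ1 θ2 : EuclideanSpace ℝ (Fin d),
      μ * ‖θ1 - θ2‖ ^ 2 ≤
        ⟪(∑ z, P z • gradl θ1 z) - (∑ z, P z • gradl θ2 z), θ1 - θ2⟫)
    -- `θ` minimizes the risk under `P`: first-order condition
    (hmin : ∑ z, P z • gradl θ z = 0) :
    ‖θ - θstar‖ ≤ (1 / μ) * max 0 ((1 - α) * ‖g0‖ - α * ‖g'‖) := by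
  have hn0 : (0:ℝ) < ‖g0‖ := norm_pos_iff.mpr hg0ne
  have hn' : (0:ℝ) ≤ ‖g'‖ := norm_nonneg _
  have hsum : (0:ℝ) < ‖g'‖ + ‖g0‖ := by linarith
  set c : ℝ := 1 - α * p - α * p * (‖g'‖ / ‖g0‖) with hc
  -- the gradient of the risk at θ* is c • g0
  have hS : (∑ z, P z • gradl θstar z) = c • g0 := by
    have h1 : (∑ z, P z • gradl θstar z)
        = (α * p) • (∑ z, P' z • gradl θstar z)
          + (α * (1 - p) + (1 - α)) • (∑ z, P0 z • gradl θstar z) := by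
      rw [Finset.smul_sum, Finset.smul_sum, ← Finset.sum_add_distrib]
      refine Finset.sum_congr rfl fun z _ => ?_
      rw [hP z, smul_smul, smul_smul, ← add_smul]
      congr 1
      ring
    rw [h1, ← hg0, ← hg', hanti, smul_smul, ← add_smul, hc]
    congr 1
    ring
  have hcn : c * ‖g0‖ = max 0 ((1 - α) * ‖g0‖ - α * ‖g'‖) := by
    rcases le_total ((1 / α) * (‖g0‖ / (‖g'‖ + ‖g0‖))) 1 with h | h
    · have hpv : p = (1 / α) * (‖g0‖ / (‖g'‖ + ‖g0‖)) := by rw [hp, min_eq_right h]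
      have hcz : c = 0 := by
        rw [hc, hpv]; field_simp; ring
      have h2 : ‖g0‖ / (‖g'‖ + ‖g0‖) ≤ α := by
        rwa [one_div, inv_mul_le_iff₀ hα0, mul_one] at h
      have h3 : ‖g0‖ ≤ α * (‖g'‖ + ‖g0‖) := (div_le_iff₀ hsum).mp h2
      rw [hcz, zero_mul]
      symm
      rw [max_eq_left]
      nlinarith
    · have hpv : p = 1 := by rw [hp, min_eq_left h]
      have h2 : α ≤ ‖g0‖ / (‖g'‖ + ‖g0‖) := by
        rwa [one_div, ← div_eq_inv_mul, one_le_div hα0] at h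
      have h3 : α * (‖g'‖ + ‖g0‖) ≤ ‖g0‖ := (le_div_iff₀ hsum).mp h2
      have hv : c * ‖g0‖ = (1 - α) * ‖g0‖ - α * ‖g'‖ := by
        rw [hc, hpv]; field_simp
      rw [hv]
      symm
      rw [max_eq_right]
      nlinarith
  have hM : 0 ≤ c * ‖g0‖ := by rw [hcn]; exact le_max_left _ _
  have hcnn : 0 ≤ c := by nlinarith
  have hSnorm : ‖(∑ z, P z • gradl θstar z)‖ = c * ‖g0‖ := by
    rw [hS, norm_smul, Real.norm_eq_abs, abs_of_nonneg hcnn]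
  have key := hsc θ θstar
  rw [hmin, zero_sub] at key
  have h4 : ⟪-(∑ z, P z • gradl θstar z), θ - θstar⟫
      ≤ (c * ‖g0‖) * ‖θ - θstar‖ := by
    calc ⟪-(∑ z, P z • gradl θstar z), θ - θstar⟫
        ≤ ‖-(∑ z, P z • gradl θstar z)‖ * ‖θ - θstar‖ := real_inner_le_norm _ _
      _ = (c * ‖g0‖) * ‖θ - θstar‖ := by rw [norm_neg, hSnorm]
  have ht : (0:ℝ) ≤ ‖θ - θstar‖ := norm_nonneg _
  have hμt : μ * ‖θ - θstar‖ ≤ c * ‖g0‖ := by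
    rcases ht.eq_or_lt with h0 | h0
    · rw [← h0, mul_zero]; exact hM
    · have h5 : μ * ‖θ - θstar‖ ^ 2 ≤ (c * ‖g0‖) * ‖θ - θstar‖ := le_trans key h4
      have h6 : (μ * ‖θ - θstar‖) * ‖θ - θstar‖ ≤ (c * ‖g0‖) * ‖θ - θstar‖ := by
        calc (μ * ‖θ - θstar‖) * ‖θ - θstar‖ = μ * ‖θ - θstar‖ ^ 2 := by ring
          _ ≤ (c * ‖g0‖) * ‖θ - θstar‖ := h5
      exact le_of_mul_le_mul_right h6 h0
  rw [← hcn]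
  calc ‖θ - θstar‖ = (1 / μ) * (μ * ‖θ - θstar‖) := by field_simp
    _ ≤ (1 / μ) * (c * ‖g0‖) := by
        apply mul_le_mul_of_nonneg_left hμt
        positivity
end

section
/- If α ≥ ‖g0‖/(‖g'‖ + ‖g0‖) where g0 = E_{z∼P0}∇ℓ(θ*;z) and g' = E_{z∼P'}∇ℓ(θ*;z) are antiparallel and nonzero, then under the gradient-neutralizing strategy the expected gradient of the mixture P at θ* is zero, so θ* is a stationary point of the risk under P (and hence its minimizer if ℓ is strictly convex). -/
/-- If `α ≥ ‖g0‖/(‖g'‖ + ‖g0‖)`, then under the gradient-neutralizing strategy the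
expected gradient of the mixture `P` at `θ*` is zero, so `θ*` is a stationary
point of the risk under `P`. -/
theorem stmt_14 {d : ℕ} {Z : Type*} [Fintype Z]
    (gradl : EuclideanSpace ℝ (Fin d) → Z → EuclideanSpace ℝ (Fin d))
    (P0 P' : Z → ℝ) (α : ℝ) (θstar : EuclideanSpace ℝ (Fin d))
    (hα0 : 0 < α) (hα1 : α ≤ 1)
    (g0 g' : EuclideanSpace ℝ (Fin d))
    (hg0 : g0 = ∑ z, P0 z • gradl θstar z)
    (hg' : g' = ∑ z, P' z • gradl θstar z)
    (hg0ne : g0 ≠ 0) (hg'ne : g' ≠ 0)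
    -- `g0` and `g'` are antiparallel: `g'/‖g'‖ = -g0/‖g0‖`
    (hanti : ‖g'‖⁻¹ • g' = -(‖g0‖⁻¹ • g0))
    (p : ℝ) (hp : p = min 1 ((1 / α) * (‖g0‖ / (‖g'‖ + ‖g0‖))))
    (P : Z → ℝ)
    (hP : ∀ z, P z = α * (p * P' z + (1 - p) * P0 z) + (1 - α) * P0 z)
    (hαbig : α ≥ ‖g0‖ / (‖g'‖ + ‖g0‖)) :
    ∑ z, P z • gradl θstar z = 0 := by
  have hg0pos : 0 < ‖g0‖ := norm_pos_iff.mpr hg0ne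
  have hg'pos : 0 < ‖g'‖ := norm_pos_iff.mpr hg'ne
  have hs : 0 < ‖g'‖ + ‖g0‖ := by linarith
  have hple : (1 / α) * (‖g0‖ / (‖g'‖ + ‖g0‖)) ≤ 1 := by
    rw [div_mul_eq_mul_div, one_mul, div_le_one hα0]
    exact hαbig
  have hp' : p = (1 / α) * (‖g0‖ / (‖g'‖ + ‖g0‖)) := by
    rw [hp, min_eq_right hple]
  have hαp : α * p = ‖g0‖ / (‖g'‖ + ‖g0‖) := by
    rw [hp']; field_simp
  have hg'eq : g' = -((‖g'‖ / ‖g0‖) • g0) := by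
    have := congrArg (fun v => ‖g'‖ • v) hanti
    simpa [smul_smul, mul_inv_cancel₀ hg'pos.ne', div_eq_mul_inv] using this
  have hsum : ∑ z, P z • gradl θstar z = (α * p) • g' + (1 - α * p) • g0 := by
    rw [hg0, hg', Finset.smul_sum, Finset.smul_sum, ← Finset.sum_add_distrib]
    refine Finset.sum_congr rfl fun z _ => ?_
    rw [hP]
    module
  rw [hsum, hg'eq, hαp, smul_neg, smul_smul]
  have hc : ‖g0‖ / (‖g'‖ + ‖g0‖) * (‖g'‖ / ‖g0‖) = 1 - ‖g0‖ / (‖g'‖ + ‖g0‖) := by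
    field_simp
    ring
  rw [hc, neg_add_cancel]
end
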